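/- arXiv:1411.0635 — 7 statements merged into one kernel-verified Lean document; each statement's English description precedes it below -/
import Mathlib

section
/- Suppose ψ is an invertible operator on a finite-dimensional complex Hilbert space, U(t) is a differentiable curve of unitary operators with U(0) = 1, and ψ(t) = U(t)ψ satisfies the Uhlmann horizontality condition ψ̇(t)†ψ(t) = ψ(t)†ψ̇(t) for all t. Then U(t) is constant (i.e., U̇(t) = 0 for all t). -/
open Matrix

/-- Proposition 1: a non-stationary unitary evolution operator never generates an
Uhlmann-horizontal curve in the standard purification bundle. -/
theorem unitary_evolution_not_uhlmann_horizontal {n : ℕ}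
    (ψ : Matrix (Fin n) (Fin n) ℂ) (hψ : IsUnit ψ)
    (U U' : ℝ → Matrix (Fin n) (Fin n) ℂ)
    (hUunit : ∀ t, U t ∈ Matrix.unitaryGroup (Fin n) ℂ)
    (hU0 : U 0 = 1)
    (hderiv : ∀ t i j, HasDerivAt (fun s => U s i j) (U' t i j) t)
    (hhor : ∀ t, (U' t * ψ)ᴴ * (U t * ψ) = (U t * ψ)ᴴ * (U' t * ψ)) :
    ∀ t, U' t = 0 := by
  intro t
  have h2 : U t * (U t)ᴴ = 1 := by
    have := (Matrix.mem_unitaryGroup_iff.mp (hUunit t))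
    simpa [Matrix.star_eq_conjTranspose] using this
  -- skew-hermiticity of U' from differentiating unitarity
  have hskew : (U' t)ᴴ * U t + (U t)ᴴ * U' t = 0 := by
    ext i j
    simp only [Matrix.zero_apply]
    have hf : HasDerivAt (fun s => ∑ k, star (U s k i) * U s k j)
        (∑ k, (star (U' t k i) * U t k j + star (U t k i) * U' t k j)) t :=
      HasDerivAt.fun_sum fun k _ => ((hderiv t k i).star.mul (hderiv t k j))
    have hconst : (fun s => ∑ k, star (U s k i) * U s k j) =
        (fun _ : ℝ => ((1 : Matrix (Fin n) (Fin n) ℂ) i j)) := by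
      funext s
      have hs : (U s)ᴴ * U s = 1 := by
        have := (Matrix.mem_unitaryGroup_iff'.mp (hUunit s))
        simpa [Matrix.star_eq_conjTranspose] using this
      calc ∑ k, star (U s k i) * U s k j
          = ((U s)ᴴ * U s) i j := by
            simp [Matrix.mul_apply, Matrix.conjTranspose_apply]
        _ = (1 : Matrix (Fin n) (Fin n) ℂ) i j := by rw [hs]
    have hzero : (∑ k, (star (U' t k i) * U t k j + star (U t k i) * U' t k j)) = 0 :=
      hf.unique (hconst ▸ hasDerivAt_const t _)
    calc ((U' t)ᴴ * U t + (U t)ᴴ * U' t) i j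
        = ∑ k, (star (U' t k i) * U t k j + star (U t k i) * U' t k j) := by
          simp [Matrix.add_apply, Matrix.mul_apply, Matrix.conjTranspose_apply,
            Finset.sum_add_distrib]
      _ = 0 := hzero
  -- from horizontality, cancel ψ
  have hψH : IsUnit ψᴴ := (Matrix.isUnit_conjTranspose ψ).mpr hψ
  have hhor' : (U' t)ᴴ * U t = (U t)ᴴ * U' t := by
    have h := hhor t
    rw [Matrix.conjTranspose_mul, Matrix.conjTranspose_mul] at h
    have h' : ψᴴ * ((U' t)ᴴ * U t * ψ) = ψᴴ * ((U t)ᴴ * U' t * ψ) := by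
      simpa [Matrix.mul_assoc] using h
    have h'' : (U' t)ᴴ * U t * ψ = (U t)ᴴ * U' t * ψ := hψH.mul_left_cancel h'
    exact hψ.mul_right_cancel h''
  have hAzero : (U t)ᴴ * U' t = 0 := by
    have h := hskew
    rw [hhor'] at h
    have h2' : (2 : ℂ) • ((U t)ᴴ * U' t) = 0 := by
      rw [two_smul]; exact h
    have := smul_eq_zero.mp h2'
    rcases this with h | h
    · norm_num at h
    · exact h
  calc U' t = (U t * (U t)ᴴ) * U' t := by rw [h2, one_mul]
    _ = U t * ((U t)ᴴ * U' t) := by rw [Matrix.mul_assoc]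
    _ = 0 := by rw [hAzero, Matrix.mul_zero]
end

section
/- Let ψ be an invertible operator on H and let U(ψ) = {U unitary : U(ψ†ψ) = (ψ†ψ)U}. If φ and χ satisfy φ†φ = χ†χ = ψ†ψ and χχ† = φφ†, then χ = φU for some U in U(ψ). -/
open Matrix

theorem reduced_bundle_projection_injective {n : ℕ}
    (ψ φ χ : Matrix (Fin n) (Fin n) ℂ)
    (hψ : IsUnit ψ) (hφ : IsUnit φ) (hχ : IsUnit χ)
    (h1 : φᴴ * φ = ψᴴ * ψ) (h2 : χᴴ * χ = ψᴴ * ψ) (h3 : χ * χᴴ = φ * φᴴ) :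
    ∃ U ∈ Matrix.unitaryGroup (Fin n) ℂ,
      U * (ψᴴ * ψ) = (ψᴴ * ψ) * U ∧ χ = φ * U := by
  haveI := hφ.invertible
  haveI : Invertible φᴴ := φ.invertibleConjTranspose
  refine ⟨φ⁻¹ * χ, ?_, ?_, ?_⟩
  · rw [Matrix.mem_unitaryGroup_iff]
    have hstar : star (φ⁻¹ * χ) = χᴴ * (φᴴ)⁻¹ := by
      simp [Matrix.star_eq_conjTranspose, Matrix.conjTranspose_mul,
        Matrix.conjTranspose_nonsing_inv]
    rw [hstar]
    calc φ⁻¹ * χ * (χᴴ * (φᴴ)⁻¹) = φ⁻¹ * (χ * χᴴ) * (φᴴ)⁻¹ := by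
          simp [Matrix.mul_assoc]
      _ = φ⁻¹ * (φ * φᴴ) * (φᴴ)⁻¹ := by rw [h3]
      _ = 1 := by
          rw [← Matrix.mul_assoc, Matrix.inv_mul_of_invertible, Matrix.one_mul,
            Matrix.mul_inv_of_invertible]
  · calc φ⁻¹ * χ * (ψᴴ * ψ) = φ⁻¹ * (χ * (χᴴ * χ)) := by rw [h2, Matrix.mul_assoc]
      _ = φ⁻¹ * (χ * χᴴ * χ) := by rw [Matrix.mul_assoc]
      _ = φ⁻¹ * (φ * φᴴ * χ) := by rw [h3]
      _ = φᴴ * χ := by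
          rw [Matrix.mul_assoc φ, ← Matrix.mul_assoc, Matrix.inv_mul_of_invertible,
            Matrix.one_mul]
      _ = φᴴ * φ * (φ⁻¹ * χ) := by
          rw [Matrix.mul_assoc, ← Matrix.mul_assoc φ, Matrix.mul_inv_of_invertible,
            Matrix.one_mul]
      _ = ψᴴ * ψ * (φ⁻¹ * χ) := by rw [h1]
  · rw [← Matrix.mul_assoc, Matrix.mul_inv_of_invertible, Matrix.one_mul]
end

section
/- Let ψ be invertible with spectral projections P_j of ψ†ψ (orthogonal projections onto the eigenspaces). For any φ with φ†φ = ψ†ψ and any X with X†φ + φ†X = 0, each operator ξ_j = P_j φ† X P_j (ψ†ψ)⁻¹ is skew-Hermitian and commutes with ψ†ψ. -/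
open Matrix

/-- The mechanical connection form takes values in the Lie algebra `u(ψ)`:
each `ξ_j = P_j φᴴ X P_j (ψᴴψ)⁻¹` is skew-Hermitian and commutes with `ψᴴψ`. -/
theorem connection_form_values_in_isotropy_algebra {n m : ℕ}
    (ψ φ X : Matrix (Fin n) (Fin n) ℂ) (hψ : IsUnit ψ)
    (h : φᴴ * φ = ψᴴ * ψ) (hX : Xᴴ * φ + φᴴ * X = 0)
    (P : Fin m → Matrix (Fin n) (Fin n) ℂ) (μ : Fin m → ℝ)
    (hPherm : ∀ j, (P j)ᴴ = P j) (hPidem : ∀ j, P j * P j = P j)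
    (hμpos : ∀ j, 0 < μ j)
    (heig : ∀ j, (ψᴴ * ψ) * P j = (μ j : ℂ) • P j) :
    ∀ j, (P j * φᴴ * X * P j * (ψᴴ * ψ)⁻¹)ᴴ = -(P j * φᴴ * X * P j * (ψᴴ * ψ)⁻¹) ∧
      (P j * φᴴ * X * P j * (ψᴴ * ψ)⁻¹) * (ψᴴ * ψ)
        = (ψᴴ * ψ) * (P j * φᴴ * X * P j * (ψᴴ * ψ)⁻¹) := by
  intro j
  have hA : IsUnit (ψᴴ * ψ) := ((Matrix.isUnit_conjTranspose ψ).mpr hψ).mul hψ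
  have hAH : (ψᴴ * ψ)ᴴ = ψᴴ * ψ := by
    simp [Matrix.conjTranspose_mul]
  have hμ0 : (μ j : ℂ) ≠ 0 := by
    exact_mod_cast (hμpos j).ne'
  -- P j * (ψᴴψ) = μ j • P j
  have hPA : P j * (ψᴴ * ψ) = (μ j : ℂ) • P j := by
    have := congrArg conjTranspose (heig j)
    simpa [Matrix.conjTranspose_mul, hAH, hPherm, Complex.conj_ofReal,
      Matrix.conjTranspose_smul] using this
  -- P j * (ψᴴψ)⁻¹ = (μ j)⁻¹ • P j
  have hPAinv : P j * (ψᴴ * ψ)⁻¹ = ((μ j : ℂ))⁻¹ • P j := by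
    have h1 : P j * (ψᴴ * ψ) * (ψᴴ * ψ)⁻¹ = P j := by
      rw [mul_assoc, Matrix.mul_nonsing_inv _ ((Matrix.isUnit_iff_isUnit_det _).mp hA),
        mul_one]
    rw [hPA, Matrix.smul_mul] at h1
    calc P j * (ψᴴ * ψ)⁻¹
        = ((μ j : ℂ))⁻¹ • ((μ j : ℂ) • (P j * (ψᴴ * ψ)⁻¹)) := by
          rw [smul_smul, inv_mul_cancel₀ hμ0, one_smul]
      _ = ((μ j : ℂ))⁻¹ • P j := by rw [h1]
  -- X ᴴ φ = - φᴴ X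
  have hXφ : Xᴴ * φ = -(φᴴ * X) := by
    exact eq_neg_of_add_eq_zero_left hX
  set ξ := P j * φᴴ * X * P j * (ψᴴ * ψ)⁻¹ with hξ
  have hξ' : ξ = ((μ j : ℂ))⁻¹ • (P j * φᴴ * X * P j) := by
    rw [hξ, mul_assoc, mul_assoc, mul_assoc, hPAinv]
    simp [Matrix.mul_smul, mul_assoc]
  constructor
  · have hH : (P j * φᴴ * X * P j)ᴴ = -(P j * φᴴ * X * P j) := by
      rw [show (P j * φᴴ * X * P j)ᴴ = P j * (Xᴴ * φ) * P j by
        simp [Matrix.conjTranspose_mul, hPherm, mul_assoc]]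
      rw [hXφ]
      simp [mul_assoc]
    rw [hξ', Matrix.conjTranspose_smul, hH]
    simp [Complex.star_def, Complex.conj_ofReal]
  · rw [hξ']
    rw [Matrix.smul_mul, Matrix.mul_smul]
    congr 1
    have hl : P j * φᴴ * X * P j * (ψᴴ * ψ) = (μ j : ℂ) • (P j * φᴴ * X * P j) := by
      rw [mul_assoc, hPA, Matrix.mul_smul]
    have hr : (ψᴴ * ψ) * (P j * φᴴ * X * P j) = (μ j : ℂ) • (P j * φᴴ * X * P j) := by
      simp only [← mul_assoc]
      rw [heig j]
      simp only [Matrix.smul_mul]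
    rw [hl, hr]
end

section
/- With notation as in the mechanical connection: for φ with φ†φ = ψ†ψ, X with X†φ + φ†X = 0, and η skew-Hermitian commuting with ψ†ψ, one has Tr((Σ_j P_j φ†X P_j(ψ†ψ)⁻¹)† φ†φ η + η† φ†φ (Σ_j P_j φ†X P_j(ψ†ψ)⁻¹)) = Tr(X†φη + η†φ†X). -/
open Matrix

/-- The identity `I_φ(A_φ(X))η = J_φ(X)η` verifying that `A` is the mechanical
connection of the metric `G(X,Y) = ħ Tr(XᴴY + YᴴX)`. -/
theorem mechanical_connection_identity {n m : ℕ}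
    (ψ φ X η : Matrix (Fin n) (Fin n) ℂ) (hψ : IsUnit ψ)
    (h : φᴴ * φ = ψᴴ * ψ) (hX : Xᴴ * φ + φᴴ * X = 0)
    (P : Fin m → Matrix (Fin n) (Fin n) ℂ) (μ : Fin m → ℝ)
    (hPherm : ∀ j, (P j)ᴴ = P j) (hPidem : ∀ j, P j * P j = P j)
    (hPsum : (∑ j, P j) = 1) (hμpos : ∀ j, 0 < μ j)
    (heig : ∀ j, (ψᴴ * ψ) * P j = (μ j : ℂ) • P j)
    (hη : ηᴴ = -η) (hηcomm : η * (ψᴴ * ψ) = (ψᴴ * ψ) * η)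
    (hPη : ∀ j, P j * η = η * P j) :
    Matrix.trace
        ((∑ j, P j * φᴴ * X * P j * (ψᴴ * ψ)⁻¹)ᴴ * (φᴴ * φ) * η
          + ηᴴ * (φᴴ * φ) * (∑ j, P j * φᴴ * X * P j * (ψᴴ * ψ)⁻¹))
      = Matrix.trace (Xᴴ * φ * η + ηᴴ * φᴴ * X) := by
  have hMH : (ψᴴ * ψ)ᴴ = ψᴴ * ψ := by
    simp [Matrix.conjTranspose_mul]
  have hdet : IsUnit (ψᴴ * ψ).det := by
    have hd := (Matrix.isUnit_iff_isUnit_det ψ).mp hψ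
    rw [Matrix.det_mul, Matrix.det_conjTranspose]
    exact hd.star.mul hd
  have hinv1 : (ψᴴ * ψ)⁻¹ * (ψᴴ * ψ) = 1 := Matrix.nonsing_inv_mul _ hdet
  have hinv2 : (ψᴴ * ψ) * (ψᴴ * ψ)⁻¹ = 1 := Matrix.mul_nonsing_inv _ hdet
  have hinvH : ((ψᴴ * ψ)⁻¹)ᴴ = (ψᴴ * ψ)⁻¹ := by
    rw [Matrix.conjTranspose_nonsing_inv, hMH]
  -- M η M⁻¹ = η
  have hc1 : (ψᴴ * ψ) * η * (ψᴴ * ψ)⁻¹ = η := by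
    rw [← hηcomm, mul_assoc, hinv2, mul_one]
  -- M⁻¹ ηᴴ M = ηᴴ
  have hc2 : (ψᴴ * ψ)⁻¹ * ηᴴ * (ψᴴ * ψ) = ηᴴ := by
    rw [hη, mul_neg, neg_mul, mul_assoc, hηcomm, ← mul_assoc, hinv1, one_mul]
  have hPηH : ∀ j, P j * ηᴴ = ηᴴ * P j := by
    intro j
    rw [hη, mul_neg, neg_mul, hPη j]
  have hc2' : (ψᴴ * ψ)⁻¹ * ηᴴ * ψᴴ * ψ = ηᴴ := by
    rw [mul_assoc ((ψᴴ * ψ)⁻¹ * ηᴴ) ψᴴ ψ]; exact hc2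
  rw [h, Matrix.trace_add, Matrix.trace_add]
  have t1 : Matrix.trace ((∑ j, P j * φᴴ * X * P j * (ψᴴ * ψ)⁻¹)ᴴ * (ψᴴ * ψ) * η)
      = Matrix.trace (Xᴴ * φ * η) := by
    rw [Matrix.conjTranspose_sum, Finset.sum_mul, Finset.sum_mul, Matrix.trace_sum]
    have key : ∀ j : Fin m,
        Matrix.trace ((P j * φᴴ * X * P j * (ψᴴ * ψ)⁻¹)ᴴ * (ψᴴ * ψ) * η)
          = Matrix.trace (η * P j * Xᴴ * φ) := by
      intro j
      have hCT : (P j * φᴴ * X * P j * (ψᴴ * ψ)⁻¹)ᴴ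
          = (ψᴴ * ψ)⁻¹ * P j * Xᴴ * φ * P j := by
        simp [Matrix.conjTranspose_mul, hPherm, hinvH, Matrix.mul_assoc]
      rw [hCT,
        Matrix.trace_mul_cycle ((ψᴴ * ψ)⁻¹ * P j * Xᴴ * φ * P j) (ψᴴ * ψ) η,
        Matrix.trace_mul_cycle η ((ψᴴ * ψ)⁻¹ * P j * Xᴴ * φ * P j) (ψᴴ * ψ)]
      simp only [← Matrix.mul_assoc]
      rw [hc1, Matrix.trace_mul_comm (η * P j * Xᴴ * φ) (P j)]
      simp only [← Matrix.mul_assoc]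
      rw [hPη j, Matrix.mul_assoc η (P j) (P j), hPidem j]
    rw [Finset.sum_congr rfl fun j _ => key j]
    have hsum : ∑ j, Matrix.trace (η * P j * Xᴴ * φ)
        = Matrix.trace ((η * ∑ j, P j) * Xᴴ * φ) := by
      rw [Finset.mul_sum, Finset.sum_mul, Finset.sum_mul, Matrix.trace_sum]
    rw [hsum, hPsum, mul_one, ← Matrix.trace_mul_cycle Xᴴ φ η]
  have t2 : Matrix.trace (ηᴴ * (ψᴴ * ψ) * ∑ j, P j * φᴴ * X * P j * (ψᴴ * ψ)⁻¹)
      = Matrix.trace (ηᴴ * φᴴ * X) := by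
    rw [Finset.mul_sum, Matrix.trace_sum]
    have key : ∀ j : Fin m,
        Matrix.trace (ηᴴ * (ψᴴ * ψ) * (P j * φᴴ * X * P j * (ψᴴ * ψ)⁻¹))
          = Matrix.trace (ηᴴ * P j * φᴴ * X) := by
      intro j
      simp only [← Matrix.mul_assoc]
      rw [Matrix.trace_mul_comm (ηᴴ * ψᴴ * ψ * P j * φᴴ * X * P j) ((ψᴴ * ψ)⁻¹)]
      simp only [← Matrix.mul_assoc]
      rw [hc2', Matrix.trace_mul_comm (ηᴴ * P j * φᴴ * X) (P j)]
      simp only [← Matrix.mul_assoc]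
      rw [hPηH j, Matrix.mul_assoc ηᴴ (P j) (P j), hPidem j]
    rw [Finset.sum_congr rfl fun j _ => key j]
    have hsum : ∑ j, Matrix.trace (ηᴴ * P j * φᴴ * X)
        = Matrix.trace ((ηᴴ * ∑ j, P j) * φᴴ * X) := by
      rw [Finset.mul_sum, Finset.sum_mul, Finset.sum_mul, Matrix.trace_sum]
    rw [hsum, hPsum, mul_one]
  rw [t1, t2]
end

section
/- Let ψ, φ be invertible with φ†φ = ψ†ψ and let U be unitary. Denote by A_ψ the connection form A_φ(X) = Σ_j P_j φ†X P_j(ψ†ψ)⁻¹ with P_j the spectral projections of ψ†ψ. Then for tangent vectors X at φ (X†φ + φ†X = 0), A_{φU}(XU) = U† A_φ(X) U. -/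
open Matrix

/-- Proposition 8: equivariance of the mechanical connection form,
`A_{φU}(XU) = Uᴴ A_φ(X) U`. -/
theorem connection_form_equivariance {n m : ℕ}
    (ψ φ X U : Matrix (Fin n) (Fin n) ℂ) (hψ : IsUnit ψ)
    (h : φᴴ * φ = ψᴴ * ψ) (hX : Xᴴ * φ + φᴴ * X = 0)
    (hU : U ∈ Matrix.unitaryGroup (Fin n) ℂ)
    (P : Fin m → Matrix (Fin n) (Fin n) ℂ) (μ : Fin m → ℝ)
    (hPherm : ∀ j, (P j)ᴴ = P j) (hPidem : ∀ j, P j * P j = P j)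
    (hPsum : (∑ j, P j) = 1) (hμpos : ∀ j, 0 < μ j)
    (heig : ∀ j, (ψᴴ * ψ) * P j = (μ j : ℂ) • P j) :
    (∑ j, (Uᴴ * P j * U) * (φ * U)ᴴ * (X * U) * (Uᴴ * P j * U) * ((ψ * U)ᴴ * (ψ * U))⁻¹)
      = Uᴴ * (∑ j, P j * φᴴ * X * P j * (ψᴴ * ψ)⁻¹) * U := by
  have h1 : Uᴴ * U = 1 := by
    simpa [star_eq_conjTranspose] using hU.1
  have h2 : U * Uᴴ = 1 := by
    simpa [star_eq_conjTranspose] using hU.2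
  have hUinv : U⁻¹ = Uᴴ := inv_eq_left_inv h1
  have hUHinv : Uᴴ⁻¹ = U := inv_eq_left_inv h2
  have hinv : ((ψ * U)ᴴ * (ψ * U))⁻¹ = Uᴴ * (ψᴴ * ψ)⁻¹ * U := by
    have : (ψ * U)ᴴ * (ψ * U) = Uᴴ * (ψᴴ * ψ) * U := by
      simp [conjTranspose_mul, Matrix.mul_assoc]
    rw [this, Matrix.mul_inv_rev, Matrix.mul_inv_rev, hUinv, hUHinv, Matrix.mul_assoc]
  have h1' : ∀ x : Matrix (Fin n) (Fin n) ℂ, Uᴴ * (U * x) = x := fun x => by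
    rw [← Matrix.mul_assoc, h1, Matrix.one_mul]
  have h2' : ∀ x : Matrix (Fin n) (Fin n) ℂ, U * (Uᴴ * x) = x := fun x => by
    rw [← Matrix.mul_assoc, h2, Matrix.one_mul]
  rw [Finset.mul_sum, Finset.sum_mul]
  refine Finset.sum_congr rfl fun j _ => ?_
  rw [hinv]
  simp [conjTranspose_mul, Matrix.mul_assoc, h1', h2']
end

section
/- If H is a smooth real-valued function on invertible matrices that is invariant under the right unitary action (H(ψU) = H(ψ) for all unitary U), then along any solution ψ(t) of ψ̇ = X_H(ψ) the quantity ψ(t)†ψ(t) is constant, where X_H is the Hamiltonian vector field of H with respect to Ω(X,Y) = −iħTr(X†Y − Y†X). -/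
open Matrix

open ComplexOrder in
/-- If `A` is skew-Hermitian then `1 + A` is invertible. -/
lemma skew_one_add_isUnit {n : ℕ} (A : Matrix (Fin n) (Fin n) ℂ) (hA : Aᴴ = -A) :
    IsUnit (1 + A) := by
  have h1 : ((1 : Matrix (Fin n) (Fin n) ℂ) + A)ᴴ * (1 + A) = 1 + Aᴴ * A := by
    rw [conjTranspose_add, conjTranspose_one, hA]
    noncomm_ring
  have hpd : ((1 : Matrix (Fin n) (Fin n) ℂ) + Aᴴ * A).PosDef :=
    Matrix.PosDef.add_posSemidef Matrix.PosDef.one (posSemidef_conjTranspose_mul_self A)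
  have hu := hpd.isUnit
  rw [← h1] at hu
  have hdet : IsUnit ((1 + A)ᴴ * (1 + A)).det := (Matrix.isUnit_iff_isUnit_det _).1 hu
  rw [det_mul] at hdet
  exact (Matrix.isUnit_iff_isUnit_det _).2 (isUnit_of_mul_isUnit_right hdet)

/-- The Cayley transform of a skew-Hermitian matrix is unitary, and
`(1 + A) * U = 1 - A`. -/
lemma cayley_unitary {n : ℕ} (A : Matrix (Fin n) (Fin n) ℂ) (hA : Aᴴ = -A) :
    (1 - A) * (1 + A)⁻¹ ∈ Matrix.unitaryGroup (Fin n) ℂ ∧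
      (1 + A) * ((1 - A) * (1 + A)⁻¹) = 1 - A := by
  have hB : IsUnit (1 + A) := skew_one_add_isUnit A hA
  have hC : IsUnit (1 - A) := by
    have h := skew_one_add_isUnit (-A) (by rw [conjTranspose_neg, hA])
    rwa [← sub_eq_add_neg] at h
  have hBdet : IsUnit (1 + A).det := (Matrix.isUnit_iff_isUnit_det _).1 hB
  have hCdet : IsUnit (1 - A).det := (Matrix.isUnit_iff_isUnit_det _).1 hC
  have hcomm : (1 + A) * (1 - A) = (1 - A) * (1 + A) := by noncomm_ring
  constructor
  · rw [Matrix.mem_unitaryGroup_iff', star_eq_conjTranspose]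
    have hCT : ((1 - A) * (1 + A)⁻¹)ᴴ = (1 - A)⁻¹ * (1 + A) := by
      rw [conjTranspose_mul, conjTranspose_nonsing_inv]
      congr 1
      · rw [conjTranspose_add, conjTranspose_one, hA, sub_eq_add_neg]
      · rw [conjTranspose_sub, conjTranspose_one, hA, sub_neg_eq_add]
    rw [hCT]
    calc (1 - A)⁻¹ * (1 + A) * ((1 - A) * (1 + A)⁻¹)
        = (1 - A)⁻¹ * ((1 + A) * (1 - A)) * (1 + A)⁻¹ := by
          simp only [Matrix.mul_assoc]
      _ = (1 - A)⁻¹ * ((1 - A) * (1 + A)) * (1 + A)⁻¹ := by rw [hcomm]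
      _ = ((1 - A)⁻¹ * (1 - A)) * ((1 + A) * (1 + A)⁻¹) := by
          simp only [Matrix.mul_assoc]
      _ = 1 := by rw [Matrix.nonsing_inv_mul _ hCdet, Matrix.mul_nonsing_inv _ hBdet]; simp
  · calc (1 + A) * ((1 - A) * (1 + A)⁻¹)
        = ((1 + A) * (1 - A)) * (1 + A)⁻¹ := by simp only [Matrix.mul_assoc]
      _ = (1 - A) * ((1 + A) * (1 + A)⁻¹) := by rw [hcomm, Matrix.mul_assoc]
      _ = 1 - A := by rw [Matrix.mul_nonsing_inv _ hBdet, Matrix.mul_one]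

/-- Theorem 1 (Noether): the flow of a right-unitarily-symmetric Hamiltonian system
preserves the level sets of the momentum map, i.e. `ψ(t)ᴴψ(t)` is constant. -/
theorem noether_momentum_conservation {n : ℕ} (hbar : ℝ) (hpos : 0 < hbar)
    (H : Matrix (Fin n) (Fin n) ℂ → ℝ)
    (XH : Matrix (Fin n) (Fin n) ℂ → Matrix (Fin n) (Fin n) ℂ)
    (hXH : ∀ ψ Y : Matrix (Fin n) (Fin n) ℂ, IsUnit ψ →
        HasDerivAt (fun s : ℝ => H (ψ + s • Y))
          (-Complex.I * (hbar : ℂ) *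
              (Matrix.trace ((XH ψ)ᴴ * Y) - Matrix.trace (Yᴴ * XH ψ))).re 0)
    (hinv : ∀ ψ U : Matrix (Fin n) (Fin n) ℂ, IsUnit ψ →
        U ∈ Matrix.unitaryGroup (Fin n) ℂ → H (ψ * U) = H ψ)
    (ψc : ℝ → Matrix (Fin n) (Fin n) ℂ)
    (hψunit : ∀ t, IsUnit (ψc t))
    (hflow : ∀ t i j, HasDerivAt (fun s => ψc s i j) (XH (ψc t) i j) t) :
    ∀ t, (ψc t)ᴴ * ψc t = (ψc 0)ᴴ * ψc 0 := by
  -- Step 1: for any invertible ψ, the matrix P := ψᴴ XH ψ + (XH ψ)ᴴ ψ vanishes.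
  have key : ∀ ψ : Matrix (Fin n) (Fin n) ℂ, IsUnit ψ →
      ψᴴ * XH ψ + (XH ψ)ᴴ * ψ = 0 := by
    intro ψ hψ
    set P : Matrix (Fin n) (Fin n) ℂ := ψᴴ * XH ψ + (XH ψ)ᴴ * ψ with hP
    have hPh : Pᴴ = P := by
      rw [hP, conjTranspose_add, conjTranspose_mul, conjTranspose_mul,
        conjTranspose_conjTranspose, conjTranspose_conjTranspose, add_comm]
    -- the directional derivative of H along ψ·B vanishes for skew-Hermitian B
    have hdir : ∀ B : Matrix (Fin n) (Fin n) ℂ, Bᴴ = -B →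
        (-Complex.I * (hbar : ℂ) *
          (Matrix.trace ((XH ψ)ᴴ * (ψ * B)) - Matrix.trace ((ψ * B)ᴴ * XH ψ))).re = 0 := by
      intro B hB
      -- evenness of s ↦ H(ψ + s • ψB)
      have heven : ∀ s : ℝ, H (ψ + s • (ψ * B)) = H (ψ + s • (-(ψ * B))) := by
        intro s
        have hA : ((s : ℂ) • B)ᴴ = -((s : ℂ) • B) := by
          rw [conjTranspose_smul, hB]
          simp
        obtain ⟨hUmem, hUeq⟩ := cayley_unitary ((s : ℂ) • B) hA
        have hsmul : ∀ M : Matrix (Fin n) (Fin n) ℂ, s • M = (s : ℂ) • M := by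
          intro M; ext i j; simp [Complex.real_smul]
        have hplus : ψ + s • (ψ * B) = ψ * (1 + (s : ℂ) • B) := by
          rw [hsmul, Matrix.mul_add, Matrix.mul_one, Matrix.mul_smul]
        have hminus : ψ + s • (-(ψ * B)) = ψ * (1 - (s : ℂ) • B) := by
          rw [hsmul, smul_neg, Matrix.mul_sub, Matrix.mul_one, Matrix.mul_smul,
            sub_eq_add_neg]
        have hu : IsUnit (ψ * (1 + (s : ℂ) • B)) :=
          hψ.mul (skew_one_add_isUnit _ hA)
        have := hinv (ψ * (1 + (s : ℂ) • B))
          ((1 - (s : ℂ) • B) * (1 + (s : ℂ) • B)⁻¹) hu hUmem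
        rw [Matrix.mul_assoc, hUeq] at this
        rw [hplus, hminus, this]
      -- the two derivatives at 0
      have h1 := hXH ψ (ψ * B) hψ
      have h2 := hXH ψ (-(ψ * B)) hψ
      have hfun : (fun s : ℝ => H (ψ + s • (-(ψ * B)))) =
          (fun s : ℝ => H (ψ + s • (ψ * B))) := by
        funext s; exact (heven s).symm
      rw [hfun] at h2
      have huniq := h1.unique h2
      have hneg : (-Complex.I * (hbar : ℂ) *
          (Matrix.trace ((XH ψ)ᴴ * -(ψ * B)) - Matrix.trace ((-(ψ * B))ᴴ * XH ψ))).re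
          = -(-Complex.I * (hbar : ℂ) *
          (Matrix.trace ((XH ψ)ᴴ * (ψ * B)) - Matrix.trace ((ψ * B)ᴴ * XH ψ))).re := by
        rw [Matrix.mul_neg, conjTranspose_neg, Matrix.neg_mul, Matrix.trace_neg,
          Matrix.trace_neg]
        rw [show -Matrix.trace ((XH ψ)ᴴ * (ψ * B)) - -Matrix.trace ((ψ * B)ᴴ * XH ψ)
          = -(Matrix.trace ((XH ψ)ᴴ * (ψ * B)) - Matrix.trace ((ψ * B)ᴴ * XH ψ)) by ring]
        rw [mul_neg, Complex.neg_re]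
      rw [hneg] at huniq
      linarith [huniq]
    -- apply with B = i • P
    have hBskew : (Complex.I • P)ᴴ = -(Complex.I • P) := by
      rw [conjTranspose_smul, hPh]
      simp [Complex.star_def, Complex.conj_I, neg_smul]
    have h0 := hdir (Complex.I • P) hBskew
    -- simplify the trace expression
    have htr : Matrix.trace ((XH ψ)ᴴ * (ψ * (Complex.I • P)))
        - Matrix.trace ((ψ * (Complex.I • P))ᴴ * XH ψ)
        = Complex.I * Matrix.trace (P * P) := by
      have e1 : (ψ * (Complex.I • P))ᴴ = -(Complex.I • (P * ψᴴ)) := by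
        rw [conjTranspose_mul, conjTranspose_smul, hPh]
        simp [Complex.star_def, Complex.conj_I, Matrix.smul_mul, neg_smul]
      rw [e1]
      simp only [Matrix.mul_smul, Matrix.smul_mul, Matrix.neg_mul, Matrix.trace_neg,
        Matrix.trace_smul, smul_eq_mul, sub_neg_eq_add, ← Matrix.mul_assoc]
      have h2 : Matrix.trace (P * ψᴴ * XH ψ) = Matrix.trace (ψᴴ * XH ψ * P) := by
        rw [Matrix.mul_assoc, Matrix.trace_mul_comm, Matrix.mul_assoc]
      rw [h2, ← mul_add, ← Matrix.trace_add, ← Matrix.add_mul,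
        add_comm ((XH ψ)ᴴ * ψ), ← hP]
    rw [htr] at h0
    have hre : (-Complex.I * (hbar : ℂ) * (Complex.I * Matrix.trace (P * P))).re
        = hbar * (Matrix.trace (P * P)).re := by
      rw [show -Complex.I * (hbar : ℂ) * (Complex.I * Matrix.trace (P * P))
        = (hbar : ℂ) * Matrix.trace (P * P) * (-Complex.I * Complex.I) by ring]
      rw [show -Complex.I * Complex.I = 1 by
        simp [Complex.ext_iff]]
      rw [mul_one]
      simp [Complex.mul_re]
    rw [hre] at h0
    have htrz : (Matrix.trace (P * P)).re = 0 := by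
      have := mul_eq_zero.1 h0
      rcases this with h | h
      · exact absurd h (by exact_mod_cast hpos.ne')
      · exact_mod_cast h
    -- trace (P * P) = trace (Pᴴ * P) = Σ |P i j|²
    have hsum : (Matrix.trace (P * P)).re = ∑ i, ∑ j, Complex.normSq (P j i) := by
      rw [show P * P = Pᴴ * P by rw [hPh]]
      rw [Matrix.trace]
      simp only [Matrix.diag_apply, Matrix.mul_apply, Matrix.conjTranspose_apply]
      rw [Complex.re_sum]
      congr 1
      funext i
      rw [Complex.re_sum]
      congr 1
      funext j
      simp [Complex.normSq_apply, Complex.mul_re]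
    rw [hsum] at htrz
    -- conclude P = 0
    ext i j
    have hnonneg : ∀ i ∈ (Finset.univ : Finset (Fin n)),
        0 ≤ ∑ j, Complex.normSq (P j i) := by
      intro i _
      exact Finset.sum_nonneg fun j _ => Complex.normSq_nonneg _
    have hinner := (Finset.sum_eq_zero_iff_of_nonneg hnonneg).1 htrz j (Finset.mem_univ _)
    have hinner2 := (Finset.sum_eq_zero_iff_of_nonneg
      (fun k _ => Complex.normSq_nonneg (P k j))).1 hinner i (Finset.mem_univ _)
    have := Complex.normSq_eq_zero.1 hinner2
    simpa using this
  -- Step 2: each entry of ψcᵗᴴ ψcᵗ has zero derivative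
  intro t
  ext i j
  have hderiv : ∀ s : ℝ, HasDerivAt (fun u => ((ψc u)ᴴ * ψc u) i j) 0 s := by
    intro s
    have hsum : (fun u => ((ψc u)ᴴ * ψc u) i j)
        = fun u => ∑ k, star (ψc u k i) * ψc u k j := by
      funext u
      simp [Matrix.mul_apply, Matrix.conjTranspose_apply]
    rw [hsum]
    have hterm : ∀ k : Fin n, HasDerivAt (fun u => star (ψc u k i) * ψc u k j)
        (star (XH (ψc s) k i) * ψc s k j + star (ψc s k i) * XH (ψc s) k j) s :=
      fun k => ((hflow s k i).star).mul (hflow s k j)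
    have hDsum : HasDerivAt (fun u => ∑ k, star (ψc u k i) * ψc u k j)
        (∑ k, (star (XH (ψc s) k i) * ψc s k j + star (ψc s k i) * XH (ψc s) k j)) s :=
      HasDerivAt.fun_sum fun k _ => hterm k
    have hval : (∑ k, (star (XH (ψc s) k i) * ψc s k j + star (ψc s k i) * XH (ψc s) k j))
        = ((ψc s)ᴴ * XH (ψc s) + (XH (ψc s))ᴴ * ψc s) i j := by
      simp [Matrix.add_apply, Matrix.mul_apply, Matrix.conjTranspose_apply,
        Finset.sum_add_distrib, add_comm]
    rw [hval, key (ψc s) (hψunit s)] at hDsum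
    simpa using hDsum
  exact is_const_of_deriv_eq_zero
    (fun s => (hderiv s).differentiableAt)
    (fun s => (hderiv s).deriv) t 0
end

section
/- Let ρ(t) = Σ_k p_k(t)|ψ_k(t)⟩⟨ψ_k(t)| with {|ψ_k(t)⟩} an orthonormal basis for each t and p_k(t) > 0, let {|k⟩} be a fixed orthonormal basis, and set ψ(t) = Σ_k √(p_k(t)) |ψ_k(t)⟩⟨k|. Then ψ(t)ψ(t)† = ρ(t), ψ(t) is invertible, the partial lift ∂_vΨ(t) = Σ_k (d/dt √(p_k(t)))|ψ_k(t)⟩⟨k| satisfies the Uhlmann horizontality condition (∂_vΨ)†ψ = ψ†(∂_vΨ), and for any k, l: √(p_k p_l)⟨ψ_k|ψ̇_l⟩ = ⟨k|ψ† ∂_uΨ |l⟩ where ∂_uΨ(t) = Σ_k √(p_k(t))|ψ̇_k(t)⟩⟨k|. -/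
open Matrix

private lemma gram_entry {n : ℕ} (a b : Fin n → ℂ) (x y : ℂ) :
    ∑ i, star (x * a i) * (y * b i) = star x * y * (star a ⬝ᵥ b) := by
  simp only [dotProduct, Finset.mul_sum, star_mul']
  exact Finset.sum_congr rfl fun i _ => by simp [Pi.star_apply]; ring

/-- Key computations behind Theorem 2: for the lift `ψ(t) = Σ_k √(p_k(t)) |ψ_k(t)⟩⟨k|`
of `ρ(t) = Σ_k p_k(t)|ψ_k(t)⟩⟨ψ_k(t)|`, one has `ψψᴴ = ρ`, `ψ` is invertible, the
`∂_vΨ` part is Uhlmann-horizontal, and `√(p_k p_l)⟨ψ_k|ψ̇_l⟩ = ⟨k|ψᴴ ∂_uΨ|l⟩`. -/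
theorem purification_lift_decomposition {n : ℕ}
    (v v' : ℝ → Fin n → Fin n → ℂ)
    (p : ℝ → Fin n → ℝ) (sp' : ℝ → Fin n → ℝ)
    (horth : ∀ t k l, star (v t k) ⬝ᵥ v t l = if k = l then 1 else 0)
    (hppos : ∀ t k, 0 < p t k)
    (hpsum : ∀ t, (∑ k, p t k) = 1)
    (hv' : ∀ t k i, HasDerivAt (fun s => v s k i) (v' t k i) t)
    (hsp' : ∀ t k, HasDerivAt (fun s => Real.sqrt (p s k)) (sp' t k) t) :
    ∀ t : ℝ,
      (Matrix.of fun i j => (Real.sqrt (p t j) : ℂ) * v t j i) *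
          (Matrix.of fun i j => (Real.sqrt (p t j) : ℂ) * v t j i)ᴴ
        = ∑ k, (p t k : ℂ) • Matrix.vecMulVec (v t k) (star (v t k)) ∧
      IsUnit (Matrix.of fun i j => (Real.sqrt (p t j) : ℂ) * v t j i) ∧
      (Matrix.of fun i j => (sp' t j : ℂ) * v t j i)ᴴ *
          (Matrix.of fun i j => (Real.sqrt (p t j) : ℂ) * v t j i)
        = (Matrix.of fun i j => (Real.sqrt (p t j) : ℂ) * v t j i)ᴴ *
          (Matrix.of fun i j => (sp' t j : ℂ) * v t j i) ∧
      ∀ k l, ((Real.sqrt (p t k) * Real.sqrt (p t l) : ℝ) : ℂ) *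
              (star (v t k) ⬝ᵥ v' t l)
          = ((Matrix.of fun i j => (Real.sqrt (p t j) : ℂ) * v t j i)ᴴ *
              (Matrix.of fun i j => (Real.sqrt (p t j) : ℂ) * v' t j i)) k l := by
  intro t
  have hsq : ∀ k, (Real.sqrt (p t k) : ℂ) * (Real.sqrt (p t k) : ℂ) = (p t k : ℂ) := by
    intro k
    rw [← Complex.ofReal_mul, Real.mul_self_sqrt (hppos t k).le]
  have hgram : (Matrix.of fun i j => (Real.sqrt (p t j) : ℂ) * v t j i)ᴴ *
      (Matrix.of fun i j => (Real.sqrt (p t j) : ℂ) * v t j i)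
      = Matrix.diagonal (fun k => (p t k : ℂ)) := by
    ext k l
    simp only [Matrix.mul_apply, conjTranspose_apply, of_apply]
    rw [gram_entry, horth, Complex.star_def, Complex.conj_ofReal]
    by_cases h : k = l
    · subst h; simp [hsq k]
    · simp [h]
  refine ⟨?_, ?_, ?_, ?_⟩
  · ext i j
    simp only [Matrix.mul_apply, conjTranspose_apply, of_apply, Matrix.sum_apply,
      Matrix.smul_apply, Matrix.vecMulVec_apply, Pi.star_apply, smul_eq_mul]
    refine Finset.sum_congr rfl fun k _ => ?_
    rw [star_mul', Complex.star_def, Complex.conj_ofReal]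
    ring_nf
    rw [sq, hsq k]
    ring
  · rw [Matrix.isUnit_iff_isUnit_det]
    have hdet : (Matrix.of fun i j => (Real.sqrt (p t j) : ℂ) * v t j i)ᴴ.det *
        (Matrix.of fun i j => (Real.sqrt (p t j) : ℂ) * v t j i).det
        = ∏ k, (p t k : ℂ) := by
      rw [← Matrix.det_mul, hgram, Matrix.det_diagonal]
    have hne : (∏ k, (p t k : ℂ)) ≠ 0 := by
      apply Finset.prod_ne_zero_iff.mpr
      intro k _
      exact_mod_cast (hppos t k).ne'
    refine isUnit_iff_ne_zero.mpr fun h => hne ?_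
    rw [← hdet, h, mul_zero]
  · ext k l
    simp only [Matrix.mul_apply, conjTranspose_apply, of_apply]
    rw [gram_entry, gram_entry, horth]
    by_cases h : k = l
    · subst h; simp [Complex.star_def, Complex.conj_ofReal, mul_comm]
    · simp [h]
  · intro k l
    simp only [Matrix.mul_apply, conjTranspose_apply, of_apply]
    rw [gram_entry, Complex.star_def, Complex.conj_ofReal, Complex.ofReal_mul]
end
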